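/- Let Π be a collection of k-wise δ-dependent permutations of a finite set X, i.e., for every set of k distinct inputs, the distribution of the k-tuple of outputs of a uniformly random π ∈ Π is within statistical distance δ of the corresponding distribution for a uniformly random permutation of X. Then for any integer t ≥ 1, the collection Π^t = {π_1 ∘ ⋯ ∘ π_t : π_i ∈ Π} (with the π_i chosen independently and uniformly) is k-wise ((1/2)(2δ)^t)-dependent. -/

import Mathlib

/-!
Write `D_F(x, v)` for the probability that a uniform member of the family `F` maps the tuple `x`
to `v`, and `U` for the family of all permutations. The distributions of the family
`fg : (a, b) ↦ f a * g b` compose like Markov kernels, `D_{fg}(x, v) = ∑_w D_g(x, w) D_f(w, v)`,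
and `U` absorbs any independent family on either side, so the errors multiply:
`D_{fg}(x, v) - D_U(x, v) = ∑_w (D_g(x, w) - D_U(x, w)) (D_f(w, v) - D_U(w, v))`.
For injective `x` only injective `w` contribute, and the triangle inequality shows that composing
an `ε`-dependent family with a `δ`-dependent one is `2δε`-dependent; induction on `t` concludes.
-/

open Finset

/-- The distribution, over a uniformly random index `a : I` of a family of
permutations of `X`, of the tuple of outputs on inputs `x`, evaluated at the
tuple `v`. -/
def tupleDist {X I : Type} [Fintype X] [DecidableEq X] [Fintype I] {k : ℕ}
    (fam : I → Equiv.Perm X) (x v : Fin k → X) : ℚ :=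
  ((Finset.univ.filter fun a : I => ∀ i, fam a (x i) = v i).card : ℚ) /
    (Fintype.card I : ℚ)

/-- A family of permutations of `X` is `k`-wise `δ`-dependent if for every
tuple of `k` distinct inputs, the distribution of the tuple of outputs of a
uniformly sampled member is within statistical distance `δ` of that of a
uniformly random permutation of `X`. -/
def KWiseDeltaDependent (k : ℕ) {X I : Type} [Fintype X] [DecidableEq X]
    [Fintype I] (fam : I → Equiv.Perm X) (δ : ℚ) : Prop :=
  ∀ x : Fin k → X, Function.Injective x →
    (1 / 2) * ∑ v : Fin k → X,
      |tupleDist fam x v - tupleDist (id : Equiv.Perm X → Equiv.Perm X) x v| ≤ δ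

local notation "𝒰" => tupleDist (id : Equiv.Perm _ → Equiv.Perm _)

section TupleDist

variable {X I J : Type} [Fintype X] [DecidableEq X] [Fintype I] [Fintype J] {k : ℕ}

theorem tupleDist_eq_sum (F : I → Equiv.Perm X) (x v : Fin k → X) :
    tupleDist F x v =
      (∑ a, if ⇑(F a) ∘ x = v then (1 : ℚ) else 0) / Fintype.card I := by
  simp only [tupleDist, card_filter, funext_iff, Function.comp_apply]
  push_cast
  rfl

theorem tupleDist_comp_equiv (F : I → Equiv.Perm X) (e : J ≃ I) (x v : Fin k → X) :
    tupleDist (F ∘ e) x v = tupleDist F x v := by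
  rw [tupleDist_eq_sum, tupleDist_eq_sum, Fintype.card_congr e]
  congr 1
  exact e.sum_comp fun a => if ⇑(F a) ∘ x = v then (1 : ℚ) else 0

theorem tupleDist_snd [Nonempty I] (F : J → Equiv.Perm X) (x v : Fin k → X) :
    tupleDist (fun p : I × J => F p.2) x v = tupleDist F x v := by
  rw [tupleDist_eq_sum, tupleDist_eq_sum,
    Fintype.sum_prod_type' (fun (_ : I) b => if ⇑(F b) ∘ x = v then (1 : ℚ) else 0),
    sum_const, card_univ, nsmul_eq_mul, Fintype.card_prod, Nat.cast_mul]
  exact mul_div_mul_left _ _ (Nat.cast_ne_zero.2 Fintype.card_ne_zero)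

theorem tupleDist_mul (f : I → Equiv.Perm X) (g : J → Equiv.Perm X) (x v : Fin k → X) :
    tupleDist (fun p : I × J => f p.1 * g p.2) x v =
      ∑ w, tupleDist g x w * tupleDist f w v := by
  simp only [tupleDist_eq_sum, div_mul_div_comm, ← sum_div, Fintype.card_prod, Nat.cast_mul,
    mul_comm (Fintype.card J : ℚ)]
  congr 1
  have through : ∀ a b, (if ⇑(f a * g b) ∘ x = v then (1 : ℚ) else 0) =
      ∑ w, (if ⇑(g b) ∘ x = w then 1 else 0) * (if ⇑(f a) ∘ w = v then 1 else 0) := by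
    intro a b
    simp only [ite_mul, one_mul, zero_mul, sum_ite_eq, mem_univ, if_true]
    rfl
  simp only [Fintype.sum_prod_type, through, sum_mul_sum]
  exact (sum_comm.trans (sum_congr rfl fun _ _ => sum_comm)).trans sum_comm

theorem sum_tupleDist_uniform_mul [Nonempty I] (F : I → Equiv.Perm X) (x v : Fin k → X) :
    ∑ w, 𝒰 x w * tupleDist F w v = 𝒰 x v := by
  have absorb : (fun p : I × Equiv.Perm X => F p.1 * id p.2) =
      (fun p => id p.2) ∘ Equiv.prodShear (.refl I) fun a => .mulLeft (F a) := rfl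
  rw [← tupleDist_mul, absorb, tupleDist_comp_equiv, tupleDist_snd]

theorem sum_tupleDist_mul_uniform [Nonempty I] (F : I → Equiv.Perm X) (x v : Fin k → X) :
    ∑ w, tupleDist F x w * 𝒰 w v = 𝒰 x v := by
  have absorb : (fun p : Equiv.Perm X × I => id p.1 * F p.2) =
      (fun p => id p.2) ∘
        (Equiv.prodComm _ _).trans (Equiv.prodShear (.refl I) fun a => .mulRight (F a)) := rfl
  rw [← tupleDist_mul, absorb, tupleDist_comp_equiv, tupleDist_snd]

theorem tupleDist_mul_sub_uniform [Nonempty I] [Nonempty J] (f : I → Equiv.Perm X)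
    (g : J → Equiv.Perm X) (x v : Fin k → X) :
    tupleDist (fun p : I × J => f p.1 * g p.2) x v - 𝒰 x v =
      ∑ w, (tupleDist g x w - 𝒰 x w) * (tupleDist f w v - 𝒰 w v) := by
  simp only [sub_mul, mul_sub, sum_sub_distrib, sum_tupleDist_uniform_mul,
    sum_tupleDist_mul_uniform, tupleDist_mul]
  ring

theorem tupleDist_eq_zero_of_not_injective (F : I → Equiv.Perm X) {x v : Fin k → X}
    (hx : Function.Injective x) (hv : ¬ Function.Injective v) : tupleDist F x v = 0 := by
  rw [tupleDist, filter_false_of_mem, card_empty, Nat.cast_zero, zero_div]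
  intro a _ hxv
  exact hv fun i j hij => hx <| (F a).injective <| by rw [hxv i, hxv j, hij]

end TupleDist

theorem sum_abs_sum_mul_le {V W R : Type*} [Fintype V] [Fintype W] [CommRing R] [LinearOrder R]
    [IsStrictOrderedRing R] (a : W → R) (b : W → V → R) (β : R)
    (hb : ∀ w, a w ≠ 0 → ∑ v, |b w v| ≤ β) :
    ∑ v, |∑ w, a w * b w v| ≤ (∑ w, |a w|) * β :=
  calc ∑ v, |∑ w, a w * b w v|
      ≤ ∑ v, ∑ w, |a w| * |b w v| := by
        gcongr with v
        exact (abs_sum_le_sum_abs _ _).trans_eq (by simp only [abs_mul])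
    _ = ∑ w, |a w| * ∑ v, |b w v| := by rw [sum_comm]; simp only [mul_sum]
    _ ≤ ∑ w, |a w| * β := by
        refine sum_le_sum fun w _ => ?_
        by_cases hw : a w = 0
        · simp [hw]
        · exact mul_le_mul_of_nonneg_left (hb w hw) (abs_nonneg _)
    _ = (∑ w, |a w|) * β := (sum_mul _ _ _).symm

section KWiseDeltaDependent

variable {X I J : Type} [Fintype X] [DecidableEq X] [Fintype I] [Fintype J] {k : ℕ}

theorem kWiseDeltaDependent_comp_equiv (F : I → Equiv.Perm X) (e : J ≃ I) (δ : ℚ) :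
    KWiseDeltaDependent k (F ∘ e) δ ↔ KWiseDeltaDependent k F δ := by
  simp only [KWiseDeltaDependent, tupleDist_comp_equiv]

theorem KWiseDeltaDependent.mul [Nonempty I] [Nonempty J] {f : I → Equiv.Perm X}
    {g : J → Equiv.Perm X} {δ ε : ℚ} (hf : KWiseDeltaDependent k f δ)
    (hg : KWiseDeltaDependent k g ε) :
    KWiseDeltaDependent k (fun p : I × J => f p.1 * g p.2) (2 * δ * ε) := by
  intro x hx
  have hδ : 0 ≤ δ := le_trans (by positivity) (hf x hx)
  have hbound : ∀ w, tupleDist g x w - 𝒰 x w ≠ 0 →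
      ∑ v, |tupleDist f w v - 𝒰 w v| ≤ 2 * δ := by
    intro w hw
    by_cases hinj : Function.Injective w
    · linarith [hf w hinj]
    · simp [tupleDist_eq_zero_of_not_injective _ hx hinj] at hw
  simp only [tupleDist_mul_sub_uniform]
  calc (1 / 2) * ∑ v, |∑ w, (tupleDist g x w - 𝒰 x w) * (tupleDist f w v - 𝒰 w v)|
      ≤ (1 / 2) * ((∑ w, |tupleDist g x w - 𝒰 x w|) * (2 * δ)) := by
        gcongr
        exact sum_abs_sum_mul_le _ _ _ hbound
    _ ≤ (1 / 2) * ((2 * ε) * (2 * δ)) := by gcongr; linarith [hg x hx]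
    _ = 2 * δ * ε := by ring

end KWiseDeltaDependent

def composedFamily {X I : Type} (fam : I → Equiv.Perm X) (t : ℕ) (g : Fin t → I) :
    Equiv.Perm X :=
  (List.ofFn fun j => fam (g j)).prod

theorem composedFamily_one {X I : Type} (fam : I → Equiv.Perm X) :
    composedFamily fam 1 ∘ (Equiv.funUnique (Fin 1) I).symm = fam := by
  funext a
  simp [composedFamily]

theorem composedFamily_succ {X I : Type} (fam : I → Equiv.Perm X) (t : ℕ) :
    composedFamily fam (t + 1) ∘ Fin.consEquiv (fun _ => I) =
      fun p => fam p.1 * composedFamily fam t p.2 := by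
  funext p
  simp [composedFamily, List.ofFn_succ]

/-- Composition theorem of Kaplan–Naor–Reingold: composing `t` independent
uniform samples from a `k`-wise `δ`-dependent family of permutations yields a
`k`-wise `(1/2)(2δ)^t`-dependent family. -/
theorem stmt_15 {X I : Type} [Fintype X] [DecidableEq X] [Fintype I]
    [Nonempty I] (k : ℕ) (fam : I → Equiv.Perm X) (δ : ℚ)
    (h : KWiseDeltaDependent k fam δ) (t : ℕ) (ht : 1 ≤ t) :
    KWiseDeltaDependent k
      (fun g : Fin t → I => (List.ofFn fun j => fam (g j)).prod)
      ((1 / 2) * (2 * δ) ^ t) := by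
  change KWiseDeltaDependent k (composedFamily fam t) _
  induction t, ht using Nat.le_induction with
  | base =>
    rw [← kWiseDeltaDependent_comp_equiv _ (Equiv.funUnique (Fin 1) I).symm, composedFamily_one]
    convert h using 1
    ring
  | succ t _ ih =>
    have h_succ := h.mul ih
    rw [← composedFamily_succ, kWiseDeltaDependent_comp_equiv] at h_succ
    convert h_succ using 1
    ring
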